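/- Let A be a Hermitian n×n complex matrix and c a real scalar. All eigenvalues of the 2n×2n Nambu matrix M = [[A, cI], [−cI, −A]] are real if and only if every eigenvalue ω of A satisfies ω² ≥ c²; moreover, if some eigenvalue ω of A satisfies |ω| < |c|, then M has the purely imaginary, nonreal eigenvalues ±i√(c² − ω²) (dynamical instability). -/

import Mathlib

open Matrix Module End

/-!
The Nambu matrix squares to the block-diagonal matrix `diag(A² − c², A² − c²)`. Hence every
eigenvalue `λ` of `M` satisfies `λ² + c² = ω²` for an eigenvalue `ω` of `A`, which is real since
`A` is Hermitian; so `λ` is real exactly when `ω² ≥ c²`. Conversely, for an eigenvector `v` of `A`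
with eigenvalue `ω` and any `ν` with `ν² = ω² − c²`, the vector `(c v, (ν − ω) v)` is an
eigenvector of `M` with eigenvalue `ν`; taking `ν = ±i√(c² − ω²)` gives the instability.
-/

theorem Matrix.IsHermitian.conj_eq_of_mulVec_eq_smul {𝕜 ι : Type*} [RCLike 𝕜] [Fintype ι]
    [DecidableEq ι] {A : Matrix ι ι 𝕜} (hA : A.IsHermitian) {v : ι → 𝕜} {ω : 𝕜}
    (hv : v ≠ 0) (hAv : A *ᵥ v = ω • v) : starRingEnd 𝕜 ω = ω :=
  (isSymmetric_toEuclideanLin_iff.mpr hA).conj_eigenvalue_eq_self <|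
    hasEigenvalue_of_hasEigenvector (x := WithLp.toLp 2 v)
      ⟨mem_eigenspace_iff.mpr (by simp [hAv]), by simpa using hv⟩

section CommRing

variable {ι R : Type*} [Fintype ι] [CommRing R]

/-- If `A² v = s² v`, then `A v + s v` is an eigenvector for `s` unless it vanishes, in which
case `v` is one for `-s`. -/
theorem Matrix.exists_mulVec_eq_smul_of_mul_self_mulVec_eq_sq_smul {A : Matrix ι ι R}
    {v : ι → R} {s : R} (hv : v ≠ 0) (hAAv : (A * A) *ᵥ v = s ^ 2 • v) :
    ∃ ω, ω ^ 2 = s ^ 2 ∧ ∃ u, u ≠ 0 ∧ A *ᵥ u = ω • u := by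
  by_cases hu : A *ᵥ v + s • v = 0
  · refine ⟨-s, neg_sq s, v, hv, ?_⟩
    rw [neg_smul]
    exact add_eq_zero_iff_eq_neg.mp hu
  · refine ⟨s, rfl, _, hu, ?_⟩
    rw [mulVec_add, mulVec_smul, mulVec_mulVec, hAAv, smul_add, smul_smul, ← sq]
    abel

theorem Matrix.exists_mulVec_eq_smul_of_fromBlocks_mulVec_eq_smul {B : Matrix ι ι R} {μ : R}
    {w : ι ⊕ ι → R} (hw : w ≠ 0) (hBw : fromBlocks B 0 0 B *ᵥ w = μ • w) :
    ∃ u, u ≠ 0 ∧ B *ᵥ u = μ • u := by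
  have hinl : B *ᵥ (w ∘ Sum.inl) = μ • (w ∘ Sum.inl) := by
    ext i
    simpa [fromBlocks_mulVec] using congrFun hBw (Sum.inl i)
  have hinr : B *ᵥ (w ∘ Sum.inr) = μ • (w ∘ Sum.inr) := by
    ext i
    simpa [fromBlocks_mulVec] using congrFun hBw (Sum.inr i)
  by_cases hl : w ∘ Sum.inl = 0
  · refine ⟨w ∘ Sum.inr, fun hr => hw ?_, hinr⟩
    ext (i | i)
    exacts [congrFun hl i, congrFun hr i]
  · exact ⟨_, hl, hinl⟩

variable [DecidableEq ι]

def nambuMatrix (A : Matrix ι ι R) (c : R) : Matrix (ι ⊕ ι) (ι ⊕ ι) R :=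
  fromBlocks A (c • 1) (-(c • 1)) (-A)

theorem nambuMatrix_mul_self (A : Matrix ι ι R) (c : R) :
    nambuMatrix A c * nambuMatrix A c =
      fromBlocks (A * A - c ^ 2 • 1) 0 0 (A * A - c ^ 2 • 1) := by
  simp only [nambuMatrix, fromBlocks_multiply]
  congr 1 <;>
    simp only [mul_one, one_mul, mul_neg, neg_mul, neg_neg, smul_neg, smul_smul, sq,
      Algebra.mul_smul_comm, Algebra.smul_mul_assoc, add_neg_cancel, neg_add_cancel] <;>
    abel

theorem nambuMatrix_mulVec_sumElim {A : Matrix ι ι R} {c ω ν : R} {v : ι → R}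
    (hAv : A *ᵥ v = ω • v) (hν : ν ^ 2 = ω ^ 2 - c ^ 2) :
    nambuMatrix A c *ᵥ Sum.elim (c • v) ((ν - ω) • v) =
      ν • Sum.elim (c • v) ((ν - ω) • v) := by
  rw [nambuMatrix, fromBlocks_mulVec]
  ext (i | i)
  · simp only [Sum.elim_comp_inl, Sum.elim_comp_inr, Sum.elim_inl, mulVec_smul, smul_mulVec,
      one_mulVec, hAv, Pi.add_apply, Pi.smul_apply, smul_eq_mul]
    ring
  · simp only [Sum.elim_comp_inl, Sum.elim_comp_inr, Sum.elim_inr, mulVec_smul, smul_mulVec,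
      one_mulVec, neg_mulVec, hAv, smul_neg, Pi.add_apply, Pi.neg_apply, Pi.smul_apply,
      smul_eq_mul]
    linear_combination (-(v i)) * hν

theorem exists_mul_self_mulVec_eq_smul_of_nambuMatrix_mulVec_eq_smul {A : Matrix ι ι R}
    {c lam : R} {w : ι ⊕ ι → R} (hw : w ≠ 0) (hMw : nambuMatrix A c *ᵥ w = lam • w) :
    ∃ u, u ≠ 0 ∧ (A * A) *ᵥ u = (lam ^ 2 + c ^ 2) • u := by
  have hM2w : (nambuMatrix A c * nambuMatrix A c) *ᵥ w = lam ^ 2 • w := by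
    rw [← mulVec_mulVec, hMw, mulVec_smul, hMw, smul_smul, ← sq]
  rw [nambuMatrix_mul_self] at hM2w
  obtain ⟨u, hu, hBu⟩ := exists_mulVec_eq_smul_of_fromBlocks_mulVec_eq_smul hw hM2w
  refine ⟨u, hu, ?_⟩
  rw [sub_mulVec, smul_mulVec, one_mulVec, sub_eq_iff_eq_add] at hBu
  rw [hBu, add_smul]

end CommRing

section Field

variable {ι K : Type*} [Fintype ι] [DecidableEq ι] [Field K]

theorem exists_nambuMatrix_mulVec_eq_smul {A : Matrix ι ι K} {c ω ν : K} {v : ι → K}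
    (hc : c ≠ 0) (hv : v ≠ 0) (hAv : A *ᵥ v = ω • v) (hν : ν ^ 2 = ω ^ 2 - c ^ 2) :
    ∃ w, w ≠ 0 ∧ nambuMatrix A c *ᵥ w = ν • w := by
  refine ⟨_, fun h => smul_ne_zero hc hv ?_, nambuMatrix_mulVec_sumElim hAv hν⟩
  simpa using congrArg (· ∘ Sum.inl) h

theorem exists_sq_eq_of_nambuMatrix_mulVec_eq_smul [IsAlgClosed K] {A : Matrix ι ι K}
    {c lam : K} {w : ι ⊕ ι → K} (hw : w ≠ 0) (hMw : nambuMatrix A c *ᵥ w = lam • w) :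
    ∃ ω, ω ^ 2 = lam ^ 2 + c ^ 2 ∧ ∃ u, u ≠ 0 ∧ A *ᵥ u = ω • u := by
  obtain ⟨u, hu, hAAu⟩ := exists_mul_self_mulVec_eq_smul_of_nambuMatrix_mulVec_eq_smul hw hMw
  obtain ⟨s, hs⟩ := IsAlgClosed.exists_pow_nat_eq (lam ^ 2 + c ^ 2) two_pos
  rw [← hs] at hAAu ⊢
  exact exists_mulVec_eq_smul_of_mul_self_mulVec_eq_sq_smul hu hAAu

end Field

section Complex

variable {ι : Type*} [Fintype ι] [DecidableEq ι]

theorem nambuMatrix_eigenvalue_im_eq_zero {A : Matrix ι ι ℂ} (hA : A.IsHermitian) {c : ℝ}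
    (hstable : ∀ ω : ℂ, (∃ v : ι → ℂ, v ≠ 0 ∧ A *ᵥ v = ω • v) → c ^ 2 ≤ Complex.normSq ω)
    {lam : ℂ} {w : ι ⊕ ι → ℂ} (hw : w ≠ 0) (hMw : nambuMatrix A (c : ℂ) *ᵥ w = lam • w) :
    lam.im = 0 := by
  obtain ⟨ω, hω2, u, hu, hAu⟩ := exists_sq_eq_of_nambuMatrix_mulVec_eq_smul hw hMw
  obtain ⟨r, rfl⟩ := Complex.conj_eq_iff_real.mp (hA.conj_eq_of_mulVec_eq_smul hu hAu)
  have hcr : c ^ 2 ≤ r ^ 2 := by simpa [sq] using hstable _ ⟨u, hu, hAu⟩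
  have hlam : lam ^ 2 = ((√(r ^ 2 - c ^ 2) : ℝ) : ℂ) ^ 2 := by
    rw [← Complex.ofReal_pow, Real.sq_sqrt (by linarith)]
    push_cast
    linear_combination -hω2
  rcases sq_eq_sq_iff_eq_or_eq_neg.mp hlam with h | h <;> simp [h]

theorem nambuMatrix_unstable_of_norm_lt {A : Matrix ι ι ℂ} (hA : A.IsHermitian) {c : ℝ} {ω : ℂ}
    (hω : ∃ v : ι → ℂ, v ≠ 0 ∧ A *ᵥ v = ω • v) (hωc : ‖ω‖ < |c|) :
    let μ : ℂ := Complex.I * (√(c ^ 2 - Complex.normSq ω) : ℝ)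
    (∃ w, w ≠ 0 ∧ nambuMatrix A (c : ℂ) *ᵥ w = μ • w) ∧
      (∃ w, w ≠ 0 ∧ nambuMatrix A (c : ℂ) *ᵥ w = (-μ) • w) ∧ μ.re = 0 ∧ μ.im ≠ 0 := by
  obtain ⟨v, hv, hAv⟩ := hω
  obtain ⟨r, rfl⟩ := Complex.conj_eq_iff_real.mp (hA.conj_eq_of_mulVec_eq_smul hv hAv)
  have hrc : r ^ 2 < c ^ 2 := sq_lt_sq.mpr (by simpa using hωc)
  have hc : (c : ℂ) ≠ 0 := Complex.ofReal_ne_zero.mpr (by rintro rfl; nlinarith [sq_nonneg r])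
  have hs : 0 < √(c ^ 2 - r ^ 2) := Real.sqrt_pos.mpr (by linarith)
  have hμ : (Complex.I * (√(c ^ 2 - r ^ 2) : ℝ)) ^ 2 = (r : ℂ) ^ 2 - (c : ℂ) ^ 2 := by
    rw [mul_pow, Complex.I_sq, ← Complex.ofReal_pow, Real.sq_sqrt (by linarith)]
    push_cast
    ring
  simp only [Complex.normSq_ofReal, ← sq]
  exact ⟨exists_nambuMatrix_mulVec_eq_smul hc hv hAv hμ,
    exists_nambuMatrix_mulVec_eq_smul hc hv hAv (by rwa [neg_sq]), by simp,
    by simpa using hs.ne'⟩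

end Complex

/-- **Dynamical stability criterion for the Nambu matrix with scalar pairing.**
For Hermitian `A` and real `c`, all eigenvalues of `M = [[A, cI], [−cI, −A]]` are real
iff every eigenvalue `ω` of `A` satisfies `ω² ≥ c²`; moreover if some eigenvalue `ω`
of `A` satisfies `|ω| < |c|`, then `M` has the purely imaginary, nonreal eigenvalues
`±i√(c² − ω²)` (dynamical instability). -/
theorem nambu_scalar_pairing_stability {n : ℕ}
    (A : Matrix (Fin n) (Fin n) ℂ) (hA : A.IsHermitian) (c : ℝ)
    (M : Matrix (Fin n ⊕ Fin n) (Fin n ⊕ Fin n) ℂ)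
    (hM : M = Matrix.fromBlocks A ((c : ℂ) • (1 : Matrix (Fin n) (Fin n) ℂ))
                (-((c : ℂ) • (1 : Matrix (Fin n) (Fin n) ℂ))) (-A)) :
    ((∀ lam : ℂ, (∃ w : Fin n ⊕ Fin n → ℂ, w ≠ 0 ∧ M.mulVec w = lam • w) → lam.im = 0)
      ↔ (∀ ω : ℂ, (∃ v : Fin n → ℂ, v ≠ 0 ∧ A.mulVec v = ω • v) →
          c ^ 2 ≤ Complex.normSq ω))
    ∧ (∀ ω : ℂ, (∃ v : Fin n → ℂ, v ≠ 0 ∧ A.mulVec v = ω • v) →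
        ‖ω‖ < |c| →
        (let μ : ℂ := Complex.I * (Real.sqrt (c ^ 2 - Complex.normSq ω) : ℝ);
          (∃ w : Fin n ⊕ Fin n → ℂ, w ≠ 0 ∧ M.mulVec w = μ • w)
          ∧ (∃ w : Fin n ⊕ Fin n → ℂ, w ≠ 0 ∧ M.mulVec w = (-μ) • w)
          ∧ μ.re = 0 ∧ μ.im ≠ 0)) := by
  change M = nambuMatrix A (c : ℂ) at hM
  subst hM
  refine ⟨⟨fun hreal ω hω => ?_, fun hstable lam ⟨w, hw, hMw⟩ =>
    nambuMatrix_eigenvalue_im_eq_zero hA hstable hw hMw⟩,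
    fun ω hω hωc => nambuMatrix_unstable_of_norm_lt hA hω hωc⟩
  by_contra! hωc
  have hnorm : ‖ω‖ < |c| := by
    rwa [← abs_norm, ← sq_lt_sq, Complex.sq_norm]
  obtain ⟨hμ, -, -, him⟩ := nambuMatrix_unstable_of_norm_lt hA hω hnorm
  exact him (hreal _ hμ)
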